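/- arXiv:2311.18074 — 5 statements merged into one kernel-verified Lean document; each statement's English description precedes it below -/
import Mathlib

section
/- Let Ĝ be a finite game with cost functions Ĵ_i and let â* be a pure-strategy Nash equilibrium of Ĝ with robustness margin μ(â*) = (1/2)·min_i min_{b_i ≠ â_i*} (Ĵ_i(b_i, â_{-i}*) − Ĵ_i(â*)). Then for every ε > 0, there exist perturbations ΔJ_i : A → ℝ with max_i max_a |ΔJ_i(a)| = μ(â*) + ε such that â* is not a pure-strategy Nash equilibrium of the game with costs J_i = Ĵ_i + ΔJ_i. Hence μ(â*) is the supremum of perturbation magnitudes preserving the equilibrium. -/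
/-!
Let player `j` and deviation `b ≠ â*_j` attain the minimum defining `μ`, so that
`Ĵ_j(b, â*_{-j}) - Ĵ_j(â*) = 2μ`. Raising `j`'s cost at `â*` by `μ + ε` and lowering it by the same
amount at `(b, â*_{-j})` makes the deviation to `b` strictly profitable, while the perturbation
has sup-norm exactly `μ + ε`.
-/

open Finset

theorem Finset.exists_mem_eq_inf'_inf' {ι : Type*} {κ : ι → Type*} {α : Type*} [LinearOrder α]
    {s : Finset ι} (hs : s.Nonempty) {t : ∀ i, Finset (κ i)} (ht : ∀ i, (t i).Nonempty)
    (f : ∀ i, κ i → α) :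
    ∃ i ∈ s, ∃ k ∈ t i, s.inf' hs (fun i => (t i).inf' (ht i) (f i)) = f i k := by
  obtain ⟨i, hi, hinf⟩ := s.exists_mem_eq_inf' hs fun i => (t i).inf' (ht i) (f i)
  obtain ⟨k, hk, hk_inf⟩ := (t i).exists_mem_eq_inf' (ht i) (f i)
  exact ⟨i, hi, k, hk, hinf.trans hk_inf⟩

section CostTransfer

variable {N : Type*} [Fintype N] [DecidableEq N] {A : N → Type*} [∀ i, DecidableEq (A i)]

def costTransfer (j : N) (a b : ∀ i, A i) (c : ℝ) : N → (∀ i, A i) → ℝ :=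
  fun i x => if i = j then (if x = a then c else if x = b then -c else 0) else 0

variable (j : N) {a b : ∀ i, A i} {c : ℝ}

@[simp]
theorem costTransfer_self_left : costTransfer j a b c j a = c := by
  simp [costTransfer]

@[simp]
theorem costTransfer_self_right (hab : a ≠ b) : costTransfer j a b c j b = -c := by
  simp [costTransfer, hab.symm]

theorem abs_costTransfer_le (hc : 0 ≤ c) (i : N) (x : ∀ i, A i) :
    |costTransfer j a b c i x| ≤ c := by
  unfold costTransfer
  split_ifs <;> simp [abs_of_nonneg hc, hc]

theorem sup'_sup'_abs_costTransfer [Nonempty N] [∀ i, Fintype (A i)]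
    [∀ i, Nonempty (A i)] (hc : 0 ≤ c) :
    (univ.sup' univ_nonempty fun i =>
      univ.sup' univ_nonempty fun x : ∀ i, A i => |costTransfer j a b c i x|) = c := by
  apply le_antisymm
  · exact sup'_le _ _ fun i _ => sup'_le _ _ fun x _ => abs_costTransfer_le j hc i x
  · refine le_sup'_of_le _ (mem_univ j) (le_sup'_of_le _ (mem_univ a) ?_)
    rw [costTransfer_self_left, abs_of_nonneg hc]

end CostTransfer

/-- the robustness margin is tight: for every ε > 0 there is a
perturbation of sup-norm exactly μ(â*) + ε destroying the equilibrium. -/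
theorem robustness_margin_tight
    {N : Type} [Fintype N] [Nonempty N] [DecidableEq N]
    (A : N → Type) [∀ i, Fintype (A i)] [∀ i, DecidableEq (A i)] [∀ i, Nonempty (A i)]
    (hcard : ∀ i, 2 ≤ Fintype.card (A i))
    (Jhat : N → (∀ i, A i) → ℝ)
    (astar : ∀ i, A i)
    (hNE : ∀ (i : N) (b : A i), Jhat i astar ≤ Jhat i (Function.update astar i b))
    (μ : ℝ)
    (hμ : μ = (1 / 2) * Finset.univ.inf' Finset.univ_nonempty (fun i =>
      (Finset.univ.filter (fun b : A i => b ≠ astar i)).inf'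
        (by
          obtain ⟨b, hb⟩ := Fintype.exists_ne_of_one_lt_card (hcard i) (astar i)
          exact ⟨b, Finset.mem_filter.mpr ⟨Finset.mem_univ b, hb⟩⟩)
        (fun b => Jhat i (Function.update astar i b) - Jhat i astar))) :
    ∀ ε : ℝ, 0 < ε →
      ∃ ΔJ : N → (∀ i, A i) → ℝ,
        (Finset.univ.sup' Finset.univ_nonempty (fun i =>
          Finset.univ.sup' Finset.univ_nonempty (fun a : ∀ i, A i => |ΔJ i a|))
            = μ + ε) ∧
        ¬ (∀ (i : N) (b : A i),
            Jhat i astar + ΔJ i astar ≤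
              Jhat i (Function.update astar i b) + ΔJ i (Function.update astar i b)) := by
  intro ε hε
  obtain ⟨j, -, b, hb, hmin⟩ := exists_mem_eq_inf'_inf' univ_nonempty _
    fun i b => Jhat i (Function.update astar i b) - Jhat i astar
  rw [hmin] at hμ
  have hbne : b ≠ astar j := (mem_filter.mp hb).2
  have hne : astar ≠ Function.update astar j b := fun h =>
    hbne (by simpa using (congrFun h j).symm)
  have hμ_nonneg : 0 ≤ μ := by linarith [hNE j b]
  refine ⟨costTransfer j astar (Function.update astar j b) (μ + ε),
    sup'_sup'_abs_costTransfer j (by linarith), fun hequil => ?_⟩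
  have hdev := hequil j b
  rw [costTransfer_self_left, costTransfer_self_right j hne] at hdev
  linarith
end

section
/- If a finite game is both a potential game (admits exact potential F) and a harmonic game (satisfies Σ_{i∈N} Σ_{a_i' ∈ A_i} (J_i(a_i, a_{-i}) − J_i(a_i', a_{-i})) = 0 for every strategy profile), and moreover the game is harmonic and nonzero-strategic only trivially, then the game is nonstrategic: every player's cost is independent of its own strategy. Equivalently, the intersection of the set of potential games and the set of harmonic games (sharing N and A) is exactly the set of nonstrategic games. -/
/-!
A potential `F` turns the harmonic condition into `L F = 0`, where `L` is the Laplacian of the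
graph on strategy profiles whose edges are unilateral deviations. At a maximum of `F` every term
of `L F` is nonnegative, so all of them vanish and every neighbour of a maximum is again a maximum.
The graph is connected, hence `F` is constant, and then so is each `J i` along each player's own
strategy.
-/

open Finset Function

section HammingGraph

variable {ι : Type*} [Fintype ι] [DecidableEq ι] {A : ι → Type*}

theorem Pi.forall_of_update {P : (∀ i, A i) → Prop} {a₀ : ∀ i, A i} (h₀ : P a₀)
    (hupdate : ∀ a i b, P a → P (update a i b)) (a : ∀ i, A i) : P a := by
  have key : ∀ s : Finset ι, P (s.piecewise a a₀) := by
    intro s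
    induction s using Finset.induction with
    | empty => simpa using h₀
    | insert j s _ ih => simpa [Finset.piecewise_insert] using hupdate _ j (a j) ih
  simpa using key univ

variable [∀ i, Fintype (A i)] {β : Type*} [AddCommGroup β] [LinearOrder β] [IsOrderedAddMonoid β]

/-- The trivial deviations `b = a i` contribute zero, so this is the Laplacian of the Hamming
graph on profiles. -/
def hammingLaplacian (F : (∀ i, A i) → β) (a : ∀ i, A i) : β :=
  ∑ i, ∑ b : A i, (F a - F (update a i b))

theorem update_eq_of_hammingLaplacian_eq_zero_of_isMax {F : (∀ i, A i) → β} {a : ∀ i, A i}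
    (hF : hammingLaplacian F a = 0) (hmax : ∀ x, F x ≤ F a) (i : ι) (b : A i) :
    F (update a i b) = F a := by
  have hterm : ∀ j (c : A j), 0 ≤ F a - F (update a j c) := fun j c => sub_nonneg.2 (hmax _)
  have hrow : ∑ c : A i, (F a - F (update a i c)) = 0 :=
    congr_fun ((Fintype.sum_eq_zero_iff_of_nonneg fun j => sum_nonneg fun c _ => hterm j c).1 hF) i
  have := congr_fun ((Fintype.sum_eq_zero_iff_of_nonneg (hterm i)).1 hrow) b
  exact (sub_eq_zero.1 this).symm

theorem eq_of_hammingLaplacian_eq_zero {F : (∀ i, A i) → β} (hF : ∀ a, hammingLaplacian F a = 0)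
    (a a' : ∀ i, A i) : F a = F a' := by
  have : Nonempty (∀ i, A i) := ⟨a⟩
  obtain ⟨a₀, ha₀⟩ := Finite.exists_max F
  have hmax : ∀ a, ∀ x, F x ≤ F a := Pi.forall_of_update ha₀ fun a i b ha x =>
    (update_eq_of_hammingLaplacian_eq_zero_of_isMax (hF a) ha i b).symm ▸ ha x
  exact le_antisymm (hmax a' a) (hmax a a')

end HammingGraph

/-- a finite game is both a potential game and a harmonic game
iff it is nonstrategic. -/
theorem potential_inter_harmonic_eq_nonstrategic
    {N : Type} [Fintype N] [DecidableEq N]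
    (A : N → Type) [∀ i, Fintype (A i)]
    (J : N → (∀ i, A i) → ℝ) :
    ((∃ F : (∀ i, A i) → ℝ,
        ∀ (i : N) (a : ∀ i, A i) (a' : A i),
          J i a - J i (Function.update a i a') = F a - F (Function.update a i a')) ∧
     (∀ a : ∀ i, A i,
        ∑ i : N, ∑ b : A i, (J i a - J i (Function.update a i b)) = 0)) ↔
    (∀ (i : N) (a : ∀ i, A i) (b : A i), J i a = J i (Function.update a i b)) := by
  constructor
  · rintro ⟨⟨F, hpot⟩, hharm⟩ i a b
    have hF : ∀ a, hammingLaplacian F a = 0 := fun a => by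
      simpa only [hammingLaplacian, hpot] using hharm a
    have hdev := hpot i a b
    rw [eq_of_hammingLaplacian_eq_zero hF a (update a i b), sub_self] at hdev
    exact sub_eq_zero.1 hdev
  · intro h
    refine ⟨⟨0, fun i a b => by simp [← h i a b]⟩, fun a => ?_⟩
    simp [← h]
end

section
/- Let G and Ĝ be two finite games on the same player set N and strategy spaces A, and define α = ‖G − Ĝ‖ where the norm on the space of games is ‖G‖² = Σ_{i∈N} h_i Σ_{a∈A} J_i(a)², with h_i = |A_i|. Then every pure-strategy Nash equilibrium of Ĝ is an ε-Nash equilibrium of G for some ε ≤ max_{i∈N} 2α/√h_i. -/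
/-!
A game at distance `α` from `Ĝ` has every cost function `J i` uniformly within `α / √hᵢ` of
`Ĵ i`, since a single term `hᵢ (J i a - Ĵ i a)²` of `‖G - Ĝ‖²` is at most `α²`. Comparing the
costs at `a*` and at a unilateral deviation then loses at most twice that amount.
-/

open Finset

section

variable {N : Type*} [Fintype N] [DecidableEq N] {A : N → Type*} [∀ i, Fintype (A i)]

def gameNormSq (J : N → (∀ i, A i) → ℝ) : ℝ :=
  ∑ i, (Fintype.card (A i) : ℝ) * ∑ a : ∀ i, A i, J i a ^ 2

theorem card_mul_sq_le_gameNormSq (J : N → (∀ i, A i) → ℝ) (i : N) (a : ∀ i, A i) :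
    (Fintype.card (A i) : ℝ) * J i a ^ 2 ≤ gameNormSq J := by
  have hterm : ∀ j, 0 ≤ (Fintype.card (A j) : ℝ) * ∑ a : ∀ i, A i, J j a ^ 2 :=
    fun j => mul_nonneg (Nat.cast_nonneg _) (sum_nonneg fun _ _ => sq_nonneg _)
  calc (Fintype.card (A i) : ℝ) * J i a ^ 2
      ≤ (Fintype.card (A i) : ℝ) * ∑ a : ∀ i, A i, J i a ^ 2 := by
        gcongr
        exact single_le_sum (f := fun a => J i a ^ 2) (fun _ _ => sq_nonneg _) (mem_univ a)
    _ ≤ gameNormSq J := single_le_sum (fun j _ => hterm j) (mem_univ i)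

theorem abs_le_div_sqrt_of_mul_sq_le {x c h : ℝ} (hh : 0 < h) (hc : 0 ≤ c)
    (hx : h * x ^ 2 ≤ c ^ 2) : |x| ≤ c / √h := by
  have hx' : x ^ 2 ≤ c ^ 2 / h := by rw [le_div_iff₀ hh]; linarith
  calc |x| = √(x ^ 2) := (Real.sqrt_sq_eq_abs x).symm
    _ ≤ √(c ^ 2 / h) := Real.sqrt_le_sqrt hx'
    _ = c / √h := by rw [Real.sqrt_div (sq_nonneg c), Real.sqrt_sq hc]

theorem abs_le_sqrt_gameNormSq_div_sqrt_card (J : N → (∀ i, A i) → ℝ) (i : N) (a : ∀ i, A i) :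
    |J i a| ≤ √(gameNormSq J) / √(Fintype.card (A i) : ℝ) := by
  have hcard : (0 : ℝ) < Fintype.card (A i) := by
    exact_mod_cast Fintype.card_pos_iff.mpr ⟨a i⟩
  refine abs_le_div_sqrt_of_mul_sq_le hcard (Real.sqrt_nonneg _) ?_
  rw [Real.sq_sqrt ((card_mul_sq_le_gameNormSq J i a).trans' (by positivity))]
  exact card_mul_sq_le_gameNormSq J i a

end

theorem le_update_add_two_mul_of_abs_sub_le {N : Type*} [DecidableEq N] {A : N → Type*}
    {J Jhat : N → (∀ i, A i) → ℝ} {i : N} {δ : ℝ} {a : ∀ i, A i}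
    (hclose : ∀ a, |J i a - Jhat i a| ≤ δ)
    (hNE : ∀ b, Jhat i a ≤ Jhat i (Function.update a i b)) (b : A i) :
    J i a ≤ J i (Function.update a i b) + 2 * δ := by
  have h₁ := abs_le.mp (hclose a)
  have h₂ := abs_le.mp (hclose (Function.update a i b))
  linarith [hNE b]

theorem PSNE_is_epsilon_NE_of_nearby_game_general
    {N : Type} [Fintype N] [Nonempty N] [DecidableEq N]
    (A : N → Type) [∀ i, Fintype (A i)]
    (J Jhat : N → (∀ i, A i) → ℝ)
    (α : ℝ)
    (hα : α = Real.sqrt (∑ i : N,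
      (Fintype.card (A i) : ℝ) * ∑ a : ∀ i, A i, (J i a - Jhat i a) ^ 2))
    (astar : ∀ i, A i)
    (hNE : ∀ (i : N) (b : A i), Jhat i astar ≤ Jhat i (Function.update astar i b)) :
    ∃ ε : ℝ,
      ε ≤ Finset.univ.sup' Finset.univ_nonempty
        (fun i : N => 2 * α / Real.sqrt (Fintype.card (A i) : ℝ)) ∧
      ∀ (i : N) (b : A i),
        J i astar ≤ J i (Function.update astar i b) + ε := by
  have hclose : ∀ i a, |J i a - Jhat i a| ≤ α / √(Fintype.card (A i) : ℝ) := by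
    rw [hα]
    exact abs_le_sqrt_gameNormSq_div_sqrt_card (J - Jhat)
  refine ⟨_, le_rfl, fun i b => ?_⟩
  calc J i astar ≤ J i (Function.update astar i b) + 2 * (α / √(Fintype.card (A i) : ℝ)) :=
        le_update_add_two_mul_of_abs_sub_le (hclose i) (hNE i) b
    _ ≤ _ := by
        rw [← mul_div_assoc]
        gcongr
        exact le_sup' (fun i : N => 2 * α / √(Fintype.card (A i) : ℝ)) (mem_univ i)

/-- every PSNE of Ĝ is an ε-NE of G for some
ε ≤ max_i 2α/√h_i, where α = ‖G − Ĝ‖ in the weighted game norm. -/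
theorem PSNE_is_epsilon_NE_of_nearby_game
    {N : Type} [Fintype N] [Nonempty N] [DecidableEq N]
    (A : N → Type) [∀ i, Fintype (A i)] [∀ i, Nonempty (A i)]
    (J Jhat : N → (∀ i, A i) → ℝ)
    (α : ℝ)
    (hα : α = Real.sqrt (∑ i : N,
      (Fintype.card (A i) : ℝ) * ∑ a : ∀ i, A i, (J i a - Jhat i a) ^ 2))
    (astar : ∀ i, A i)
    (hNE : ∀ (i : N) (b : A i), Jhat i astar ≤ Jhat i (Function.update astar i b)) :
    ∃ ε : ℝ,
      ε ≤ Finset.univ.sup' Finset.univ_nonempty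
        (fun i : N => 2 * α / Real.sqrt (Fintype.card (A i) : ℝ)) ∧
      ∀ (i : N) (b : A i),
        J i astar ≤ J i (Function.update astar i b) + ε :=
  PSNE_is_epsilon_NE_of_nearby_game_general A J Jhat α hα astar hNE
end

section
/- A finite game is an exact potential game if and only if for every player i and every 4-cycle of strategy profiles a → b → c → d → a, where a,b differ only in player i's strategy, b,c differ only in player j's strategy, c,d differ only in player i's strategy, and d,a differ only in player j's strategy (i ≠ j), the sum of cost differences around the cycle vanishes: (J_i(b) − J_i(a)) + (J_j(c) − J_j(b)) + (J_i(d) − J_i(c)) + (J_j(a) − J_j(d)) = 0. -/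
/-!
Fix a reference profile `a₀` and add the players one at a time. If `F` is an exact potential
for the deviations of the players in `S`, then
`F' a = F (update a k (a₀ k)) + (J k a - J k (update a k (a₀ k)))`
is one for `insert k S`: for player `k` the first summand does not move, and for a player
`i ∈ S` the discrepancy between the two sides is the cost change around the 4-cycle
`a → update a i x → ⋯ → update a k (a₀ k) → a` of players `i` and `k`. Conversely the
cost changes around any such cycle telescope to zero along an exact potential.
-/

open Function

variable {N : Type*} [DecidableEq N] {A : N → Type*}

def IsPotentialOn (J : N → (∀ i, A i) → ℝ) (S : Set N) (F : (∀ i, A i) → ℝ) : Prop :=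
  ∀ i ∈ S, ∀ (a : ∀ i, A i) (x : A i), J i a - J i (update a i x) = F a - F (update a i x)

def fourCycleSum (J : N → (∀ i, A i) → ℝ) (i j : N) (a : ∀ i, A i) (x : A i) (y : A j) : ℝ :=
  let b := update a i x
  let c := update b j y
  let d := update c i (a i)
  (J i b - J i a) + (J j c - J j b) + (J i d - J i c) + (J j a - J j d)

theorem update_update_update_self {i j : N} (hij : i ≠ j) (a : ∀ i, A i) (x : A i) (y : A j) :
    update (update (update a i x) j y) i (a i) = update a j y := by
  rw [update_comm hij, update_idem, ← update_of_ne hij y a, update_eq_self]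

theorem fourCycleSum_eq {J : N → (∀ i, A i) → ℝ} {i j : N} (hij : i ≠ j) (a : ∀ i, A i)
    (x : A i) (y : A j) :
    fourCycleSum J i j a x y =
      (J i (update a i x) - J i a) + (J j (update (update a i x) j y) - J j (update a i x)) +
        (J i (update a j y) - J i (update (update a i x) j y)) + (J j a - J j (update a j y)) := by
  rw [fourCycleSum, update_update_update_self hij]

namespace IsPotentialOn

variable {J : N → (∀ i, A i) → ℝ} {S : Set N} {F : (∀ i, A i) → ℝ}

theorem update_sub (hF : IsPotentialOn J S F) {i : N} (hi : i ∈ S) (a : ∀ i, A i) (x : A i) :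
    J i (update a i x) - J i a = F (update a i x) - F a := by
  simpa only [update_idem, update_eq_self] using hF i hi (update a i x) (a i)

theorem fourCycleSum_eq_zero (hF : IsPotentialOn J S F) {i j : N} (hi : i ∈ S) (hj : j ∈ S)
    (hij : i ≠ j) (a : ∀ i, A i) (x : A i) (y : A j) : fourCycleSum J i j a x y = 0 := by
  have hback := hF.update_sub hi (update (update a i x) j y) (a i)
  rw [update_update_update_self hij] at hback
  rw [fourCycleSum_eq hij, hF.update_sub hi, hF.update_sub hj, hback, hF j hj]
  ring

theorem insert (hcyc : ∀ i j, i ≠ j → ∀ a x y, fourCycleSum J i j a x y = 0)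
    (hF : IsPotentialOn J S F) (k : N) (c : A k) :
    IsPotentialOn J (insert k S)
      (fun a => F (update a k c) + (J k a - J k (update a k c))) := by
  intro i hi a x
  dsimp only
  by_cases hik : i = k
  · subst hik
    rw [update_idem]
    ring
  have hdev := hF i ((Set.mem_insert_iff.1 hi).resolve_left hik) (update a k c) x
  rw [update_comm (Ne.symm hik)] at hdev
  have hcycle := hcyc i k hik a x c
  rw [fourCycleSum_eq hik] at hcycle
  linarith

end IsPotentialOn

theorem exists_isPotentialOn (J : N → (∀ i, A i) → ℝ)
    (hcyc : ∀ i j, i ≠ j → ∀ a x y, fourCycleSum J i j a x y = 0) (a₀ : ∀ i, A i)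
    (S : Finset N) : ∃ F, IsPotentialOn J S F := by
  induction S using Finset.induction_on with
  | empty => exact ⟨0, by simp [IsPotentialOn]⟩
  | insert k S _ ih =>
    obtain ⟨F, hF⟩ := ih
    exact ⟨_, Finset.coe_insert k S ▸ hF.insert hcyc k (a₀ k)⟩

theorem potential_iff_four_cycle_condition_general
    {N : Type} [Fintype N] [DecidableEq N]
    (A : N → Type)
    (J : N → (∀ i, A i) → ℝ) :
    (∃ F : (∀ i, A i) → ℝ,
      ∀ (i : N) (a : ∀ i, A i) (a' : A i),
        J i a - J i (Function.update a i a') = F a - F (Function.update a i a')) ↔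
    (∀ (i j : N), i ≠ j → ∀ (a : ∀ i, A i) (x : A i) (y : A j),
      let b := Function.update a i x
      let c := Function.update b j y
      let d := Function.update c i (a i)
      (J i b - J i a) + (J j c - J j b) + (J i d - J i c) + (J j a - J j d) = 0) := by
  constructor
  · rintro ⟨F, hF⟩ i j hij a x y
    exact IsPotentialOn.fourCycleSum_eq_zero (S := Set.univ) (fun i _ => hF i) trivial trivial
      hij a x y
  · intro hcyc
    rcases isEmpty_or_nonempty (∀ i, A i) with hA | hA
    · exact ⟨0, fun _ a => isEmptyElim a⟩
    obtain ⟨a₀⟩ := hA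
    obtain ⟨F, hF⟩ := exists_isPotentialOn J hcyc a₀ Finset.univ
    exact ⟨F, fun i => hF i (Finset.mem_coe.2 (Finset.mem_univ i))⟩

/-- Monderer–Shapley 4-cycle characterization: a finite game is
an exact potential game iff every two-player 4-cycle of unilateral deviations
has zero total cost change. -/
theorem potential_iff_four_cycle_condition
    {N : Type} [Fintype N] [DecidableEq N]
    (A : N → Type) [∀ i, Fintype (A i)]
    (J : N → (∀ i, A i) → ℝ) :
    (∃ F : (∀ i, A i) → ℝ,
      ∀ (i : N) (a : ∀ i, A i) (a' : A i),
        J i a - J i (Function.update a i a') = F a - F (Function.update a i a')) ↔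
    (∀ (i j : N), i ≠ j → ∀ (a : ∀ i, A i) (x : A i) (y : A j),
      let b := Function.update a i x
      let c := Function.update b j y
      let d := Function.update c i (a i)
      (J i b - J i a) + (J j c - J j b) + (J i d - J i c) + (J j a - J j d) = 0) :=
  potential_iff_four_cycle_condition_general A J
end

section
/- If a profile â* is a PSNE of a finite game Ĝ with robustness margin μ(â*) > 0, and a game G satisfies ‖G − Ĝ‖ ≤ μ(â*)·√(min_i h_i) in the weighted game norm ‖G‖² = Σ_i h_i Σ_a J_i(a)², then ‖J_i − Ĵ_i‖_∞ ≤ μ(â*) for every player i, and consequently â* is a PSNE of G. -/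
/-!
A single term of the weighted sum already controls each cost entry:
`h_i (J_i(a) - Ĵ_i(a))² ≤ ‖G - Ĝ‖² ≤ μ² min_j h_j ≤ μ² h_i`. A sup-norm perturbation of size `μ`
changes each deviation cost gap `Ĵ_i(a*_{-i}, b) - Ĵ_i(a*)` by at most `2μ`, while by definition
of the margin every such gap is at least `2μ`; so no deviation becomes profitable.
-/

open Finset Function

theorem Finset.filter_ne_nonempty_of_two_le_card {α : Type} [Fintype α] [DecidableEq α]
    (hα : 2 ≤ Fintype.card α) (x : α) : (univ.filter fun b : α => b ≠ x).Nonempty := by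
  obtain ⟨b, hb⟩ := Fintype.exists_ne_of_one_lt_card hα x
  exact ⟨b, mem_filter.mpr ⟨mem_univ b, hb⟩⟩

variable {N : Type} [DecidableEq N] {A : N → Type}

section Norm

variable [Fintype N] [∀ i, Fintype (A i)]

noncomputable def gameNorm (G : N → (∀ i, A i) → ℝ) : ℝ :=
  √(∑ i, (Fintype.card (A i) : ℝ) * ∑ a, G i a ^ 2)

theorem sqrt_card_mul_abs_le_gameNorm (G : N → (∀ i, A i) → ℝ) (i : N) (a : ∀ i, A i) :
    √(Fintype.card (A i) : ℝ) * |G i a| ≤ gameNorm G := by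
  rw [gameNorm, ← Real.sqrt_sq_eq_abs, ← Real.sqrt_mul (Nat.cast_nonneg _)]
  refine Real.sqrt_le_sqrt ?_
  calc (Fintype.card (A i) : ℝ) * G i a ^ 2
      ≤ (Fintype.card (A i) : ℝ) * ∑ a, G i a ^ 2 :=
        mul_le_mul_of_nonneg_left (single_le_sum (fun _ _ => sq_nonneg _) (mem_univ a))
          (Nat.cast_nonneg _)
    _ ≤ ∑ j, (Fintype.card (A j) : ℝ) * ∑ a, G j a ^ 2 :=
        single_le_sum (f := fun j => (Fintype.card (A j) : ℝ) * ∑ a, G j a ^ 2)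
          (fun _ _ => by positivity) (mem_univ i)

theorem abs_le_of_gameNorm_le [Nonempty N] {G : N → (∀ i, A i) → ℝ} {μ : ℝ} (hμ : 0 ≤ μ)
    (hG : gameNorm G ≤ μ * √(univ.inf' univ_nonempty fun i => (Fintype.card (A i) : ℝ)))
    (i : N) (a : ∀ i, A i) : |G i a| ≤ μ := by
  have hcard_pos : 0 < √(Fintype.card (A i) : ℝ) :=
    Real.sqrt_pos.mpr (by exact_mod_cast Fintype.card_pos_iff.mpr ⟨a i⟩)
  have hmin : √(univ.inf' univ_nonempty fun i => (Fintype.card (A i) : ℝ)) ≤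
      √(Fintype.card (A i) : ℝ) :=
    Real.sqrt_le_sqrt (inf'_le _ (mem_univ i))
  refine le_of_mul_le_mul_left ?_ hcard_pos
  calc √(Fintype.card (A i) : ℝ) * |G i a| ≤ gameNorm G := sqrt_card_mul_abs_le_gameNorm G i a
    _ ≤ μ * √(univ.inf' univ_nonempty fun i => (Fintype.card (A i) : ℝ)) := hG
    _ ≤ μ * √(Fintype.card (A i) : ℝ) := mul_le_mul_of_nonneg_left hmin hμ
    _ = √(Fintype.card (A i) : ℝ) * μ := mul_comm _ _

end Norm

/-- Players minimise their cost `J i`. -/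
def IsPureNashEquilibrium (J : N → (∀ i, A i) → ℝ) (a : ∀ i, A i) : Prop :=
  ∀ (i : N) (b : A i), J i a ≤ J i (update a i b)

theorem isPureNashEquilibrium_of_abs_sub_le {J Jhat : N → (∀ i, A i) → ℝ} {astar : ∀ i, A i}
    {μ : ℝ} (hgap : ∀ (i : N) (b : A i), b ≠ astar i →
      2 * μ ≤ Jhat i (update astar i b) - Jhat i astar)
    (hclose : ∀ (i : N) (a : ∀ i, A i), |J i a - Jhat i a| ≤ μ) :
    IsPureNashEquilibrium J astar := by
  intro i b
  by_cases hb : b = astar i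
  · rw [hb, update_eq_self]
  · have hstar := abs_le.mp (hclose i astar)
    have hdev := abs_le.mp (hclose i (update astar i b))
    linarith [hgap i b hb]

section Margin

variable [Fintype N] [Nonempty N] [∀ i, Fintype (A i)] [∀ i, DecidableEq (A i)]

noncomputable def robustnessMargin (hcard : ∀ i, 2 ≤ Fintype.card (A i))
    (Jhat : N → (∀ i, A i) → ℝ) (astar : ∀ i, A i) : ℝ :=
  (1 / 2) * univ.inf' univ_nonempty fun i =>
    (univ.filter fun b : A i => b ≠ astar i).inf'
      (filter_ne_nonempty_of_two_le_card (hcard i) (astar i))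
      fun b => Jhat i (update astar i b) - Jhat i astar

theorem two_mul_robustnessMargin_le (hcard : ∀ i, 2 ≤ Fintype.card (A i))
    (Jhat : N → (∀ i, A i) → ℝ) (astar : ∀ i, A i) {i : N} {b : A i} (hb : b ≠ astar i) :
    2 * robustnessMargin hcard Jhat astar ≤ Jhat i (update astar i b) - Jhat i astar := by
  have hinner := inf'_le (s := univ.filter fun b : A i => b ≠ astar i)
    (fun b : A i => Jhat i (update astar i b) - Jhat i astar) (mem_filter.mpr ⟨mem_univ b, hb⟩)
  have houter := inf'_le (fun i => (univ.filter fun b : A i => b ≠ astar i).inf'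
      (filter_ne_nonempty_of_two_le_card (hcard i) (astar i))
      fun b => Jhat i (update astar i b) - Jhat i astar) (mem_univ i)
  rw [robustnessMargin]
  linarith

end Margin

/-- a weighted-game-norm bound ‖G − Ĝ‖ ≤ μ·√(min_i h_i) implies a
sup-norm bound ‖J_i − Ĵ_i‖_∞ ≤ μ for every player, and consequently the PSNE
â* of Ĝ (with robustness margin μ > 0) remains a PSNE of G. -/
theorem norm_bound_preserves_PSNE
    {N : Type} [Fintype N] [Nonempty N] [DecidableEq N]
    (A : N → Type) [∀ i, Fintype (A i)] [∀ i, DecidableEq (A i)]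
    (hcard : ∀ i, 2 ≤ Fintype.card (A i))
    (J Jhat : N → (∀ i, A i) → ℝ)
    (astar : ∀ i, A i)
    (μ : ℝ)
    (hμ : μ = (1 / 2) * Finset.univ.inf' Finset.univ_nonempty (fun i =>
      (Finset.univ.filter (fun b : A i => b ≠ astar i)).inf'
        (by
          obtain ⟨b, hb⟩ := Fintype.exists_ne_of_one_lt_card (hcard i) (astar i)
          exact ⟨b, Finset.mem_filter.mpr ⟨Finset.mem_univ b, hb⟩⟩)
        (fun b => Jhat i (Function.update astar i b) - Jhat i astar)))
    (hμpos : 0 < μ)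
    (hnorm : Real.sqrt (∑ i : N,
        (Fintype.card (A i) : ℝ) * ∑ a : ∀ i, A i, (J i a - Jhat i a) ^ 2)
      ≤ μ * Real.sqrt (Finset.univ.inf' Finset.univ_nonempty
          (fun i : N => (Fintype.card (A i) : ℝ)))) :
    (∀ (i : N) (a : ∀ i, A i), |J i a - Jhat i a| ≤ μ) ∧
    (∀ (i : N) (b : A i), J i astar ≤ J i (Function.update astar i b)) := by
  have hmargin : μ = robustnessMargin hcard Jhat astar := hμ
  have hclose : ∀ (i : N) (a : ∀ i, A i), |J i a - Jhat i a| ≤ μ :=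
    abs_le_of_gameNorm_le (G := J - Jhat) hμpos.le hnorm
  refine ⟨hclose, isPureNashEquilibrium_of_abs_sub_le (fun i b hb => ?_) hclose⟩
  exact hmargin ▸ two_mul_robustnessMargin_le hcard Jhat astar hb
end
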